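/- arXiv:1501.01684 — 5 statements merged into one kernel-verified Lean document; each statement's English description precedes it below -/
import Mathlib

section
/- Let A be the adjacency matrix of the complete multipartite graph with c parts of size n (c, n ≥ 2). Then A³ = (c²−3c+3)n²·A + (c²−3c+2)n²·(J − A), so A is the incidence matrix of a symmetric partial geometric design with parameters (cn, (c−1)n; (c²−3c+2)n², (c²−3c+3)n²). -/
/-!
Write `A = J - B`, where `B` is the block-diagonal matrix with all-ones `n × n` blocks. From
`J² = cnJ`, `BJ = JB = nJ` and `B² = nB` one gets `AJ = JA = (c-1)nJ` and
`A² = (c-1)nJ - nA`, i.e. the graph is strongly regular with `k = μ`. Multiplying once more by `A`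
gives `A³ = (c-1)(c-2)n²J + n²A`, which is the claimed identity.
-/

open Matrix

namespace Matrix

def sameBlock (ι κ R : Type*) [DecidableEq ι] [Zero R] [One R] : Matrix (ι × κ) (ι × κ) R :=
  of fun x y => if x.1 = y.1 then 1 else 0

variable {α β γ ι κ R : Type*} [Fintype β] [Fintype ι] [Fintype κ] [DecidableEq ι]
  [NonAssocSemiring R]

theorem of_one_mul_of_one :
    (of fun (_ : α) (_ : β) => (1 : R)) * (of fun _ _ => 1 : Matrix β γ R) =
      (Fintype.card β : R) • of fun _ _ => 1 := by
  ext
  simp [mul_apply]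

theorem sameBlock_mul_of_one :
    sameBlock ι κ R * (of fun _ _ => 1 : Matrix (ι × κ) γ R) =
      (Fintype.card κ : R) • of fun _ _ => 1 := by
  ext
  simp [sameBlock, mul_apply, Fintype.sum_prod_type_right, -Finset.sum_boole]

theorem of_one_mul_sameBlock :
    (of fun _ _ => 1 : Matrix γ (ι × κ) R) * sameBlock ι κ R =
      (Fintype.card κ : R) • of fun _ _ => 1 := by
  ext
  simp [sameBlock, mul_apply, Fintype.sum_prod_type_right, -Finset.sum_boole]

theorem sameBlock_mul_sameBlock :
    sameBlock ι κ R * sameBlock ι κ R = (Fintype.card κ : R) • sameBlock ι κ R := by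
  ext x z
  by_cases h : x.1 = z.1 <;> simp [sameBlock, mul_apply, Fintype.sum_prod_type, h]

end Matrix

section CubeOfQuadratic

variable {R M : Type*} [CommRing R] [Ring M] [Algebra R M]

theorem pow_three_eq_of_mul_self_eq {A J : M} {k d : R} (hAJ : A * J = k • J)
    (hAA : A * A = k • J + d • A) : A ^ 3 = (k * k + d * k) • J + (d * d) • A := by
  rw [pow_succ', pow_two, hAA, mul_add, mul_smul_comm, mul_smul_comm, hAJ, hAA]
  module

end CubeOfQuadratic

theorem completeMultipartite_partialGeometric_general (c n : ℕ)
    (A : Matrix (Fin c × Fin n) (Fin c × Fin n) ℝ)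
    (hA : A = Matrix.of fun x y => if x.1 ≠ y.1 then (1 : ℝ) else 0)
    (J : Matrix (Fin c × Fin n) (Fin c × Fin n) ℝ)
    (hJ : J = Matrix.of fun _ _ => (1 : ℝ)) :
    A ^ 3 = (((c : ℝ) ^ 2 - 3 * c + 3) * n ^ 2) • A
        + (((c : ℝ) ^ 2 - 3 * c + 2) * n ^ 2) • (J - A) ∧
    A * J = (((c : ℝ) - 1) * n) • J ∧
    J * A = (((c : ℝ) - 1) * n) • J := by
  set B := sameBlock (Fin c) (Fin n) ℝ
  have hAB : A = J - B := by
    subst hA hJ; ext x y; by_cases h : x.1 = y.1 <;> simp [B, sameBlock, h]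
  have hJJ : J * J = ((c : ℝ) * n) • J := by simp [hJ, of_one_mul_of_one]
  have hBJ : B * J = (n : ℝ) • J := by simp [hJ, B, sameBlock_mul_of_one]
  have hJB : J * B = (n : ℝ) • J := by simp [hJ, B, of_one_mul_sameBlock]
  have hBB : B * B = (n : ℝ) • B := by simp [B, sameBlock_mul_sameBlock]
  have hAJ : A * J = (((c : ℝ) - 1) * n) • J := by
    rw [hAB, sub_mul, hJJ, hBJ]; module
  have hJA : J * A = (((c : ℝ) - 1) * n) • J := by
    rw [hAB, mul_sub, hJJ, hJB]; module
  have hAA : A * A = (((c : ℝ) - 1) * n) • J + (-(n : ℝ)) • A := by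
    rw [hAB, sub_mul, mul_sub, mul_sub, hJJ, hJB, hBJ, hBB]; module
  refine ⟨?_, hAJ, hJA⟩
  rw [pow_three_eq_of_mul_self_eq hAJ hAA]
  module

/-- The adjacency matrix `A` of the complete multipartite graph with `c` parts of
size `n` (`c, n ≥ 2`) satisfies `A³ = (c²−3c+3)n²·A + (c²−3c+2)n²·(J − A)`,
and is the incidence matrix of a symmetric partial geometric design with
parameters `(cn, (c−1)n; (c²−3c+2)n², (c²−3c+3)n²)`. -/
theorem completeMultipartite_partialGeometric (c n : ℕ) (hc : 2 ≤ c) (hn : 2 ≤ n)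
    (A : Matrix (Fin c × Fin n) (Fin c × Fin n) ℝ)
    (hA : A = Matrix.of fun x y => if x.1 ≠ y.1 then (1 : ℝ) else 0)
    (J : Matrix (Fin c × Fin n) (Fin c × Fin n) ℝ)
    (hJ : J = Matrix.of fun _ _ => (1 : ℝ)) :
    A ^ 3 = (((c : ℝ) ^ 2 - 3 * c + 3) * n ^ 2) • A
        + (((c : ℝ) ^ 2 - 3 * c + 2) * n ^ 2) • (J - A) ∧
    A * J = (((c : ℝ) - 1) * n) • J ∧
    J * A = (((c : ℝ) - 1) * n) • J :=
  completeMultipartite_partialGeometric_general c n A hA J hJ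
end

section
/- Let A_d = (J_n − I_n) ⊗ J_m. Then A_d³ = m²(n²−3n+2)(J_{mn} − A_d) + m²(n²−3n+3)A_d. Consequently, for n ≥ 2, A_d is the incidence matrix of a symmetric partial geometric design with parameters (mn, m(n−1); m²(n²−3n+2), m²(n²−3n+3)). -/
open Matrix Kronecker

/-!
Write `J_k` for the all-ones matrix, so `J_k ^ 2 = k • J_k` and `J_{mn} = J_n ⊗ J_m`.
Then `(J_n - 1) ^ 3 = (n² - 3n + 3) • J_n - 1` and `J_m ^ 3 = m² • J_m`, so the cube of
`A = (J_n - 1) ⊗ J_m` is a combination of `J_n ⊗ J_m = J` and `1 ⊗ J_m = J - A`.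
-/

namespace Matrix

variable {R : Type*} [CommRing R] {ι κ ν : Type*}

theorem sub_kronecker {μ : Type*} (A₁ A₂ : Matrix ι κ R) (B : Matrix ν μ R) :
    (A₁ - A₂) ⊗ₖ B = A₁ ⊗ₖ B - A₂ ⊗ₖ B := by
  ext
  simp [sub_mul]

theorem ones_kronecker_ones :
    (of fun _ _ => (1 : R) : Matrix ι ι R) ⊗ₖ (of fun _ _ => (1 : R) : Matrix κ κ R) =
      of fun _ _ => 1 := by
  ext
  simp

theorem ones_sub_one_apply_eq_zero_or_eq_one [DecidableEq ι] (i j : ι) :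
    ((of fun _ _ => (1 : R)) - 1 : Matrix ι ι R) i j = 0 ∨
      ((of fun _ _ => (1 : R)) - 1 : Matrix ι ι R) i j = 1 := by
  by_cases h : i = j <;> simp [h]

variable [Fintype ι]

theorem ones_mul_ones :
    (of fun _ _ => (1 : R) : Matrix κ ι R) * (of fun _ _ => 1 : Matrix ι ν R) =
      (Fintype.card ι : R) • of fun _ _ => 1 := by
  ext
  simp [mul_apply]

theorem ones_pow_succ [DecidableEq ι] (k : ℕ) :
    (of fun _ _ => (1 : R) : Matrix ι ι R) ^ (k + 1) =
      ((Fintype.card ι : R) ^ k) • of fun _ _ => 1 := by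
  induction k with
  | zero => simp
  | succ k ih => rw [pow_succ, ih, smul_mul_assoc, ones_mul_ones, smul_smul, pow_succ]

theorem ones_sub_one_pow_three [DecidableEq ι] :
    ((of fun _ _ => (1 : R)) - 1 : Matrix ι ι R) ^ 3 =
      ((Fintype.card ι : R) ^ 2 - 3 * Fintype.card ι + 3) • (of fun _ _ => 1) - 1 := by
  rw [pow_succ, sq]
  simp only [sub_mul, mul_sub, mul_one, one_mul, ones_mul_ones, smul_mul_assoc]
  module

theorem kronecker_pow [Fintype κ] [DecidableEq ι] [DecidableEq κ]
    (A : Matrix ι ι R) (B : Matrix κ κ R) (k : ℕ) : (A ⊗ₖ B) ^ k = (A ^ k) ⊗ₖ (B ^ k) := by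
  induction k with
  | zero => simp
  | succ k ih => rw [pow_succ, ih, ← mul_kronecker_mul, pow_succ, pow_succ]

end Matrix

theorem kronecker_cube_partialGeometric_general (m n : ℕ)
    (A : Matrix (Fin n × Fin m) (Fin n × Fin m) ℝ)
    (hA : A = ((Matrix.of fun _ _ => (1 : ℝ)) - (1 : Matrix (Fin n) (Fin n) ℝ)) ⊗ₖ
        (Matrix.of fun _ _ => (1 : ℝ) : Matrix (Fin m) (Fin m) ℝ))
    (J : Matrix (Fin n × Fin m) (Fin n × Fin m) ℝ)
    (hJ : J = Matrix.of fun _ _ => (1 : ℝ)) :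
    A ^ 3 = ((m : ℝ) ^ 2 * ((n : ℝ) ^ 2 - 3 * n + 2)) • (J - A)
        + ((m : ℝ) ^ 2 * ((n : ℝ) ^ 2 - 3 * n + 3)) • A ∧
    (∀ i j, A i j = 0 ∨ A i j = 1) ∧
    A * J = ((m : ℝ) * ((n : ℝ) - 1)) • J ∧
    J * A = ((m : ℝ) * ((n : ℝ) - 1)) • J := by
  rw [← ones_kronecker_ones] at hJ
  have hJA : J - A = 1 ⊗ₖ (Matrix.of fun _ _ => (1 : ℝ) : Matrix (Fin m) (Fin m) ℝ) := by
    rw [hJ, hA, sub_kronecker, sub_sub_cancel]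
  refine ⟨?_, fun i j => ?_, ?_, ?_⟩
  · rw [hJA, hA, kronecker_pow, ones_sub_one_pow_three, ones_pow_succ]
    simp only [Fintype.card_fin, ← smul_kronecker, kronecker_smul, ← add_kronecker]
    congr 1
    module
  · simpa [hA] using ones_sub_one_apply_eq_zero_or_eq_one (R := ℝ) i.1 j.1
  · rw [hA, hJ, ← mul_kronecker_mul, sub_mul, one_mul, ones_mul_ones, ones_mul_ones]
    simp only [Fintype.card_fin, kronecker_smul, ← smul_kronecker]
    congr 1
    module
  · rw [hA, hJ, ← mul_kronecker_mul, mul_sub, mul_one, ones_mul_ones, ones_mul_ones]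
    simp only [Fintype.card_fin, kronecker_smul, ← smul_kronecker]
    congr 1
    module

/-- For `A_d = (J_n − I_n) ⊗ J_m`:
`A_d³ = m²(n²−3n+2)(J_{mn} − A_d) + m²(n²−3n+3)A_d`; consequently for `n ≥ 2`,
`A_d` is the incidence matrix of a symmetric partial geometric design with
parameters `(mn, m(n−1); m²(n²−3n+2), m²(n²−3n+3))`. -/
theorem kronecker_cube_partialGeometric (m n : ℕ) (hn : 2 ≤ n)
    (A : Matrix (Fin n × Fin m) (Fin n × Fin m) ℝ)
    (hA : A = ((Matrix.of fun _ _ => (1 : ℝ)) - (1 : Matrix (Fin n) (Fin n) ℝ)) ⊗ₖ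
        (Matrix.of fun _ _ => (1 : ℝ) : Matrix (Fin m) (Fin m) ℝ))
    (J : Matrix (Fin n × Fin m) (Fin n × Fin m) ℝ)
    (hJ : J = Matrix.of fun _ _ => (1 : ℝ)) :
    A ^ 3 = ((m : ℝ) ^ 2 * ((n : ℝ) ^ 2 - 3 * n + 2)) • (J - A)
        + ((m : ℝ) ^ 2 * ((n : ℝ) ^ 2 - 3 * n + 3)) • A ∧
    (∀ i j, A i j = 0 ∨ A i j = 1) ∧
    A * J = ((m : ℝ) * ((n : ℝ) - 1)) • J ∧
    J * A = ((m : ℝ) * ((n : ℝ) - 1)) • J :=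
  kronecker_cube_partialGeometric_general m n A hA J hJ
end

section
/- The distance-1 graph of H(3,3) (the Hamming graph on 27 vertices of degree 6) yields a symmetric partial geometric design with parameters (27, 6; 6, 15): its adjacency matrix N satisfies NJ = JN = 6J and N³ = 15N + 6(J − N). -/
/-!
Write `N = A₁ + A₂ + A₃`, where `Aᵢ` joins the vertices that differ only in coordinate `i`. The `Aᵢ`
commute, satisfy `Aᵢ² = Aᵢ + 2` (each is a disjoint union of triangles), and `J = ∏ (1 + Aᵢ)`;
expanding `N³` in the elementary symmetric polynomials of the `Aᵢ` gives `N³ = 9N + 6J`.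
Over `ℕ` this identity, like `NJ = 6J`, is a decidable statement about `27 × 27` matrices, so it
is verified by evaluation and transported to any semiring along the cast `ℕ → R`.
-/

open Matrix

section Hamming

variable {ι α : Type*} [Fintype ι] [DecidableEq α]

def hammingAdj (R : Type*) [Zero R] [One R] : Matrix (ι → α) (ι → α) R :=
  of fun x y => if hammingDist x y = 1 then 1 else 0

def allOnes (n R : Type*) [One R] : Matrix n n R := of fun _ _ => 1

lemma map_hammingAdj {R S : Type*} [NonAssocSemiring R] [NonAssocSemiring S] (f : R →+* S) :
    (hammingAdj R : Matrix (ι → α) (ι → α) R).map f = hammingAdj S := by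
  ext x y
  simp [hammingAdj, apply_ite f]

lemma map_allOnes {n R S : Type*} [NonAssocSemiring R] [NonAssocSemiring S] (f : R →+* S) :
    (allOnes n R).map f = allOnes n S := by
  ext x y
  simp [allOnes]

lemma transpose_hammingAdj (R : Type*) [Zero R] [One R] :
    (hammingAdj R : Matrix (ι → α) (ι → α) R)ᵀ = hammingAdj R := by
  ext x y
  simp [hammingAdj, hammingDist_comm]

lemma transpose_allOnes (n R : Type*) [One R] : (allOnes n R)ᵀ = allOnes n R := rfl

end Hamming

lemma hammingAdj_mul_allOnes_nat :
    (hammingAdj ℕ : Matrix (Fin 3 → Fin 3) _ ℕ) * allOnes _ ℕ = 6 • allOnes _ ℕ := by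
  decide

lemma hammingAdj_cube_nat :
    (hammingAdj ℕ : Matrix (Fin 3 → Fin 3) _ ℕ) * hammingAdj ℕ * hammingAdj ℕ =
      9 • hammingAdj ℕ + 6 • allOnes _ ℕ := by
  decide

lemma hammingAdj_mul_allOnes (R : Type*) [Semiring R] :
    (hammingAdj R : Matrix (Fin 3 → Fin 3) _ R) * allOnes _ R = 6 • allOnes _ R := by
  have h := congrArg (Nat.castRingHom R).mapMatrix hammingAdj_mul_allOnes_nat
  rwa [map_mul, map_nsmul, RingHom.mapMatrix_apply, RingHom.mapMatrix_apply, map_hammingAdj,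
    map_allOnes] at h

lemma allOnes_mul_hammingAdj (R : Type*) [CommSemiring R] :
    allOnes _ R * (hammingAdj R : Matrix (Fin 3 → Fin 3) _ R) = 6 • allOnes _ R := by
  simpa only [transpose_mul, transpose_smul, transpose_hammingAdj, transpose_allOnes] using
    congrArg transpose (hammingAdj_mul_allOnes R)

lemma hammingAdj_pow_three (R : Type*) [Semiring R] :
    (hammingAdj R : Matrix (Fin 3 → Fin 3) _ R) ^ 3 = 9 • hammingAdj R + 6 • allOnes _ R := by
  have h := congrArg (Nat.castRingHom R).mapMatrix hammingAdj_cube_nat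
  rwa [map_mul, map_mul, map_add, map_nsmul, map_nsmul, RingHom.mapMatrix_apply,
    RingHom.mapMatrix_apply, map_hammingAdj, map_allOnes, ← pow_three'] at h

/-- The Hamming graph of `H(3,3)` (27 vertices, degree 6) yields a symmetric
partial geometric design with parameters `(27, 6; 6, 15)`:
`NJ = JN = 6J` and `N³ = 15N + 6(J − N)`. -/
theorem hamming_graph_design
    (N : Matrix (Fin 3 → Fin 3) (Fin 3 → Fin 3) ℝ)
    (hN : N = Matrix.of fun x y => if hammingDist x y = 1 then (1 : ℝ) else 0)
    (J : Matrix (Fin 3 → Fin 3) (Fin 3 → Fin 3) ℝ)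
    (hJ : J = Matrix.of fun _ _ => (1 : ℝ)) :
    N * J = (6 : ℝ) • J ∧ J * N = (6 : ℝ) • J ∧
    N ^ 3 = (15 : ℝ) • N + (6 : ℝ) • (J - N) := by
  obtain rfl : N = hammingAdj ℝ := hN
  obtain rfl : J = allOnes _ ℝ := hJ
  refine ⟨?_, ?_, ?_⟩
  · rw [hammingAdj_mul_allOnes, ← Nat.cast_smul_eq_nsmul ℝ]
    norm_num
  · rw [allOnes_mul_hammingAdj, ← Nat.cast_smul_eq_nsmul ℝ]
    norm_num
  · rw [hammingAdj_pow_three, ← Nat.cast_smul_eq_nsmul ℝ, ← Nat.cast_smul_eq_nsmul ℝ]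
    push_cast
    module
end

section
/- If C is an [n, m] linear code over 𝔽_q whose dual code has minimum distance d⊥ ≥ t+1, then the qᵐ codewords of C form the rows of an orthogonal array OA(qᵐ, n, q, t): every selection of t coordinate positions, restricted to the codewords of C, contains each t-tuple of 𝔽_q^t exactly q^{m−t} times. -/
/-!
Restricting codewords to the `t` chosen coordinates is a linear map `C → 𝔽_qᵗ`. If it were not
onto, a nonzero linear form on `𝔽_qᵗ` vanishing on its image, extended by zero to `𝔽_qⁿ`, would be
a nonzero dual codeword of weight at most `t`. So it is onto, every fibre is a coset of its kernel,
and the kernel has dimension `m - t` by rank–nullity.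
-/

section

variable {R ι κ : Type*} [Fintype ι] [Fintype κ] {σ : κ → ι}

theorem dotProduct_extend_zero [CommSemiring R] (hσ : Function.Injective σ) (x : ι → R)
    (u : κ → R) : x ⬝ᵥ Function.extend σ u 0 = (x ∘ σ) ⬝ᵥ u :=
  (Fintype.sum_of_injective σ hσ _ _
    (fun j hj => by rw [Function.extend_apply' _ _ _ (by simpa using hj), Pi.zero_apply, mul_zero])
    (fun i => by rw [Function.comp_apply, hσ.extend_apply])).symm

theorem hammingNorm_extend_zero [Zero R] [DecidableEq R] (hσ : Function.Injective σ) (u : κ → R) :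
    hammingNorm (Function.extend σ u 0) = hammingNorm u := by
  classical
  unfold hammingNorm
  rw [← Finset.card_image_of_injective _ hσ]
  congr 1
  ext j
  by_cases hj : ∃ i, σ i = j
  · obtain ⟨i, rfl⟩ := hj
    simp [hσ.extend_apply, hσ.eq_iff]
  · simp_all

theorem Submodule.exists_ne_zero_forall_dotProduct_eq_zero {K : Type*} [Field K] [DecidableEq κ]
    {V : Submodule K (κ → K)} (hV : V ≠ ⊤) : ∃ u ≠ 0, ∀ v ∈ V, v ⬝ᵥ u = 0 := by
  obtain ⟨g, hg, hVg⟩ := V.exists_dual_map_eq_bot_of_lt_top hV.lt_top inferInstance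
  refine ⟨(dotProductEquiv K κ).symm g, by simpa using hg, fun v hv => ?_⟩
  have hgv : g v = 0 := by simpa [hVg] using Submodule.mem_map_of_mem (f := g) hv
  rw [dotProduct_comm, ← hgv, ← dotProductEquiv_apply_apply, LinearEquiv.apply_symm_apply]

theorem surjective_funLeft_domRestrict_of_dual_weight {K : Type*} [Field K] [DecidableEq K]
    (C : Submodule K (ι → K)) (hσ : Function.Injective σ)
    (hdual : ∀ y : ι → K, (∀ x ∈ C, x ⬝ᵥ y = 0) → y ≠ 0 → Fintype.card κ + 1 ≤ hammingNorm y) :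
    Function.Surjective ((LinearMap.funLeft K K σ).domRestrict C) := by
  classical
  rw [← LinearMap.range_eq_top]
  by_contra hrange
  obtain ⟨u, hu, hperp⟩ := Submodule.exists_ne_zero_forall_dotProduct_eq_zero hrange
  have hweight := hammingNorm_extend_zero hσ u
  refine absurd (hdual (Function.extend σ u 0) (fun x hx => ?_) ?_) ?_
  · rw [dotProduct_extend_zero hσ]
    exact hperp _ ⟨⟨x, hx⟩, rfl⟩
  · rwa [← hammingNorm_ne_zero_iff, hweight, hammingNorm_ne_zero_iff]
  · rw [hweight, not_le, Nat.lt_succ_iff]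
    exact hammingNorm_le_card_fintype

end

theorem LinearMap.natCard_fiber_of_surjective {K V W : Type*} [Field K] [Finite K]
    [AddCommGroup V] [Module K V] [Module.Finite K V] [AddCommGroup W] [Module K W]
    {f : V →ₗ[K] W} (hf : Function.Surjective f) (w : W) :
    Nat.card (f ⁻¹' {w}) = Nat.card K ^ (Module.finrank K V - Module.finrank K W) := by
  have hrank := f.finrank_range_add_finrank_ker
  rw [LinearMap.range_eq_top.mpr hf, finrank_top] at hrank
  calc Nat.card (f ⁻¹' {w}) = Nat.card f.toAddMonoidHom.ker :=
        Nat.card_congr (AddMonoidHom.fiberEquivKerOfSurjective (f := f.toAddMonoidHom) hf w)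
    _ = Nat.card (LinearMap.ker f) := by rw [← LinearMap.ker_toAddSubgroup]; rfl
    _ = _ := by rw [Module.natCard_eq_pow_finrank (K := K), ← hrank, Nat.add_sub_cancel_left]

/-- Delsarte's theorem (linear case): if `C` is an `[n, m]` linear code over
`𝔽_q` whose dual code has minimum distance `≥ t+1`, then the codewords of `C`
form an orthogonal array `OA(qᵐ, n, q, t)`: for every choice of `t` distinct
coordinate positions and every `t`-tuple of values, exactly `q^{m−t}` codewords
agree with that tuple on those positions. -/
theorem delsarte_orthogonal_array
    {F : Type*} [Field F] [Fintype F] [DecidableEq F]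
    (n m t : ℕ)
    (C : Submodule F (Fin n → F))
    (hdim : Module.finrank F C = m)
    (hdual : ∀ y : Fin n → F, (∀ x ∈ C, (∑ i, x i * y i) = 0) → y ≠ 0 →
      t + 1 ≤ hammingNorm y)
    (σ : Fin t → Fin n) (hσ : Function.Injective σ) (a : Fin t → F) :
    Set.ncard {x : Fin n → F | x ∈ C ∧ ∀ i, x (σ i) = a i}
      = Fintype.card F ^ (m - t) := by
  set f := (LinearMap.funLeft F F σ).domRestrict C
  have hf : Function.Surjective f :=
    surjective_funLeft_domRestrict_of_dual_weight C hσ (by simpa [dotProduct] using hdual)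
  have hfiber : {x : Fin n → F | x ∈ C ∧ ∀ i, x (σ i) = a i} = Subtype.val '' (f ⁻¹' {a}) := by
    ext x
    constructor
    · rintro ⟨hx, hxa⟩
      exact ⟨⟨x, hx⟩, funext hxa, rfl⟩
    · rintro ⟨⟨x, hx⟩, hxa, rfl⟩
      exact ⟨hx, congrFun hxa⟩
  rw [hfiber, Set.ncard_image_of_injective _ Subtype.val_injective, ← Nat.card_coe_set_eq,
    LinearMap.natCard_fiber_of_surjective hf, hdim, Module.finrank_fin_fun,
    Nat.card_eq_fintype_card]
end

section
/- Let N be a v×v 0-1 matrix with all row and column sums k satisfying NNᵀN = βN + α(J − N) (a symmetric partial geometric design with parameters (v,k;α,β)). Let Γ be the directed graph on the flags {(p,B) : N_{pB} = 1} with (p,B) → (q,C) iff (p,B) ≠ (q,C) and N_{pC} = 1. Then Γ is a directed strongly regular graph with parameters (vk, k²−1, β−1, β−2, α); that is, its adjacency matrix M satisfies MJ = JM = (k²−1)J and M² = (β−1)I + (β−2)M + α(J − I − M). -/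
/-!
For a matrix `X` on points × blocks let `A_X = flagLift N X` be the matrix `(p,B),(q,C) ↦ X p C`
on flags, and write `A = A_N`, so that the adjacency matrix is `M = A - I`. Since summing over
flags is summing over all pairs `(q,C)` with weight `N q C`, we get `A_X A_Y = A_{X Nᵀ Y}`. Hence
`A² = A_{N Nᵀ N}`, which the partial geometric identity turns into `β A + α (A_J - A)`, and
likewise `A A_J = A_J A = k² A_J`; the DSRG equations for `M = A - I` follow by expanding.
-/

open Matrix

namespace Matrix

variable {ι κ R : Type*} [CommRing R] [DecidableEq R]

abbrev Flags (N : Matrix ι κ R) : Type _ := {x : ι × κ // N x.1 x.2 = 1}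

def flagLift (N X : Matrix ι κ R) : Matrix (Flags N) (Flags N) R :=
  X.submatrix (fun x => x.1.1) (fun y => y.1.2)

def flagGraphAdj [DecidableEq ι] [DecidableEq κ] (N : Matrix ι κ R) :
    Matrix (Flags N) (Flags N) R :=
  of fun x y => if x ≠ y ∧ N x.1.1 y.1.2 = 1 then 1 else 0

variable {N : Matrix ι κ R}

theorem sum_flags [Fintype ι] [Fintype κ] (h01 : ∀ p B, N p B = 0 ∨ N p B = 1)
    (f : ι × κ → R) :
    ∑ x : Flags N, f x.1 = ∑ y : ι × κ, N y.1 y.2 * f y := by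
  rw [← Finset.sum_subtype {y | N y.1 y.2 = 1} (by simp), Finset.sum_filter]
  refine Finset.sum_congr rfl fun y _ => ?_
  rcases h01 y.1 y.2 with h | h
  · simpa [h] using fun h10 => eq_zero_of_zero_eq_one h10 (f y)
  · simp [h]

theorem flagLift_mul_flagLift [Fintype ι] [Fintype κ] (h01 : ∀ p B, N p B = 0 ∨ N p B = 1)
    (X Y : Matrix ι κ R) :
    flagLift N X * flagLift N Y = flagLift N (X * Nᵀ * Y) := by
  ext x y
  simp only [flagLift, mul_apply, submatrix_apply, transpose_apply, Finset.sum_mul]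
  rw [sum_flags h01 fun z => X x.1.1 z.2 * Y z.1 y.1.2, Fintype.sum_prod_type]
  exact Finset.sum_congr rfl fun q _ => Finset.sum_congr rfl fun C _ => by ring

theorem flagGraphAdj_eq [DecidableEq ι] [DecidableEq κ]
    (h01 : ∀ p B, N p B = 0 ∨ N p B = 1) :
    flagGraphAdj N = flagLift N N - 1 := by
  ext x y
  by_cases hxy : x = y
  · subst hxy
    simp [flagGraphAdj, flagLift, x.2]
  · rcases h01 x.1.1 y.1.2 with h | h
    · simpa [flagGraphAdj, flagLift, hxy, h] using fun h10 : (0 : R) = 1 => h10.symm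
    · simp [flagGraphAdj, flagLift, hxy, h]

end Matrix

/-- From a symmetric partial geometric design `(v,k;α,β)` with incidence matrix
`N`, the directed graph on flags `(p,B)` with `(p,B) → (q,C)` iff
`(p,B) ≠ (q,C)` and `p ∈ C` is a directed strongly regular graph with
parameters `(vk, k²−1, β−1, β−2, α)`. -/
theorem flag_graph_dsrg (v : ℕ) (k α β : ℝ)
    (N : Matrix (Fin v) (Fin v) ℝ)
    (h01 : ∀ p B, N p B = 0 ∨ N p B = 1)
    (J : Matrix (Fin v) (Fin v) ℝ) (hJ : J = Matrix.of fun _ _ => (1 : ℝ))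
    (hrow : N * J = k • J) (hcol : J * N = k • J)
    (hpg : N * Nᵀ * N = β • N + α • (J - N))
    (M : Matrix {pB : Fin v × Fin v // N pB.1 pB.2 = 1}
               {pB : Fin v × Fin v // N pB.1 pB.2 = 1} ℝ)
    (hM : ∀ x y, M x y = if x ≠ y ∧ N x.1.1 y.1.2 = 1 then (1 : ℝ) else 0)
    (JF : Matrix {pB : Fin v × Fin v // N pB.1 pB.2 = 1}
                {pB : Fin v × Fin v // N pB.1 pB.2 = 1} ℝ)
    (hJF : JF = Matrix.of fun _ _ => (1 : ℝ)) :
    M * JF = (k ^ 2 - 1) • JF ∧ JF * M = (k ^ 2 - 1) • JF ∧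
    M * M = (β - 1) • (1 : Matrix _ _ ℝ) + (β - 2) • M + α • (JF - 1 - M) := by
  have hMA : M = flagLift N N - 1 := by rw [← flagGraphAdj_eq h01]; exact Matrix.ext hM
  have hJF' : JF = flagLift N J := by rw [hJF, hJ]; rfl
  have hJt : Jᵀ = J := by rw [hJ]; rfl
  have hNtJ : Nᵀ * J = k • J := by rw [← hJt, ← transpose_mul, hcol, transpose_smul, hJt]
  have hJNt : J * Nᵀ = k • J := by rw [← hJt, ← transpose_mul, hrow, transpose_smul, hJt]
  have hAA : flagLift N N * flagLift N N = β • flagLift N N + α • (JF - flagLift N N) := by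
    rw [flagLift_mul_flagLift h01, hpg, hJF']
    rfl
  have hAJ : flagLift N N * JF = k ^ 2 • JF := by
    rw [hJF', flagLift_mul_flagLift h01, Matrix.mul_assoc, hNtJ, Matrix.mul_smul, hrow,
      smul_smul, sq]
    rfl
  have hJA : JF * flagLift N N = k ^ 2 • JF := by
    rw [hJF', flagLift_mul_flagLift h01, hJNt, smul_mul, hcol, smul_smul, sq]
    rfl
  subst hMA
  refine ⟨?_, ?_, ?_⟩
  · rw [Matrix.sub_mul, hAJ, Matrix.one_mul, sub_smul, one_smul]
  · rw [Matrix.mul_sub, hJA, Matrix.mul_one, sub_smul, one_smul]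
  · rw [Matrix.sub_mul, Matrix.mul_sub, Matrix.mul_sub, hAA]
    simp only [Matrix.mul_one, Matrix.one_mul]
    module
end
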